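/- arXiv:2111.02480 — 3 statements merged into one kernel-verified Lean document; each statement's English description precedes it below -/
import Mathlib

section
/- In the border graph B(A) of a Wheeler DFA A, every node has out-degree at most 1: for every border (u_i, u_{i+1}) there is at most one border (u_j, u_{j+1}) such that ((u_i, u_{i+1}), (u_j, u_{j+1})) is an edge of B(A). Consequently B(A) has at most n−1 edges, where n = |Q|. -/
/-- A Wheeler DFA over a linearly ordered state set `Q` (the Wheeler order)
and a linearly ordered alphabet `A`.  The transition function is partial
(`Option`-valued).  The three Wheeler axioms are part of the structure. -/
structure WDFA (Q A : Type) [LinearOrder Q] [LinearOrder A] where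
  delta : Q → A → Option Q
  start : Q
  F : Set Q
  /-- Wheeler axiom (i): the initial state is minimum. -/
  start_le : ∀ u, start ≤ u
  /-- Wheeler axiom (ii). -/
  w2 : ∀ {u v : Q} {a b : A} {u' v' : Q},
      delta u a = some u' → delta v b = some v' → a < b → u' < v'
  /-- Wheeler axiom (iii). -/
  w3 : ∀ {u v : Q} {a : A} {u' v' : Q},
      delta u a = some u' → delta v a = some v' → u < v → u' ≤ v'

namespace WDFA

variable {Q A : Type} [LinearOrder Q] [LinearOrder A]

/-- Extension of the (partial) transition function to strings. -/
def dhat (M : WDFA Q A) : Q → List A → Option Q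
  | q, [] => some q
  | q, a :: w => (M.delta q a).bind (fun p => M.dhat p w)

/-- `q` accepts the string `w`. -/
def Acc (M : WDFA Q A) (q : Q) (w : List A) : Prop :=
  ∃ p, M.dhat q w = some p ∧ p ∈ M.F

/-- Set of labels of outgoing edges of `q`. -/
def out (M : WDFA Q A) (q : Q) : Set A := {a | (M.delta q a).isSome}

/-- Myhill–Nerode state equivalence (with equal domains of definition). -/
def MN (M : WDFA Q A) (u v : Q) : Prop :=
  ∀ w : List A, (M.dhat u w).isSome = (M.dhat v w).isSome ∧ (M.Acc u w ↔ M.Acc v w)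

/-- Myhill–Nerode state equivalence, acceptance-only version
(undefined counts as rejecting). -/
def MNacc (M : WDFA Q A) (u v : Q) : Prop :=
  ∀ w : List A, M.Acc u w ↔ M.Acc v w

/-- `u` and `v` are adjacent in the Wheeler order. -/
def Adj (M : WDFA Q A) (u v : Q) : Prop :=
  u < v ∧ ∀ w : Q, ¬ (u < w ∧ w < v)

/-- `lam` is the incoming-label map: `lam start = ⊥` (the special symbol `#`)
and every transition entering `v` is labelled `lam v`. -/
def HasLam (M : WDFA Q A) (lam : Q → WithBot A) : Prop :=
  lam M.start = ⊥ ∧ ∀ u a v, M.delta u a = some v → lam v = (a : WithBot A)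

/-- Every non-initial state has an incoming transition (reachability). -/
def Reach1 (M : WDFA Q A) : Prop :=
  ∀ u, u ≠ M.start → ∃ p a, M.delta p a = some u

/-- Every state accepts some string (is final or reaches a final state). -/
def Coacc (M : WDFA Q A) : Prop := ∀ u, ∃ w, M.Acc u w

/-- The minimum-WDFA equivalence `≡`: `u` and `v` have the same incoming
label, are Myhill–Nerode equivalent, and so is every state between them in
the Wheeler order. -/
def Equ (M : WDFA Q A) (lam : Q → WithBot A) (u v : Q) : Prop :=
  lam u = lam v ∧ M.MN u v ∧
    ∀ w, min u v ≤ w → w ≤ max u v → lam w = lam u ∧ M.MN w u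

/-- `(u,v)` is a node of the border graph: adjacent states with equal
incoming labels. -/
def IsBorder (M : WDFA Q A) (lam : Q → WithBot A) (u v : Q) : Prop :=
  M.Adj u v ∧ lam u = lam v

/-- Edge relation of the border graph `B(A)`: there is an edge from the
border `x` to the border `y` whenever `x.1 = δ(y.1, λ(x.1))` and
`x.2 = δ(y.2, λ(x.1))`. -/
def EdgeZ (M : WDFA Q A) (lam : Q → WithBot A) : Q × Q → Q × Q → Prop :=
  fun x y => M.IsBorder lam x.1 x.2 ∧ M.IsBorder lam y.1 y.2 ∧
    ∃ a : A, lam x.1 = (a : WithBot A) ∧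
      M.delta y.1 a = some x.1 ∧ M.delta y.2 a = some x.2

/-- Transition function of the quotient automaton `A/st`
(`δ([u],a) = [δ(u,a)]`, implemented via representatives). -/
noncomputable def qdelta (M : WDFA Q A) (st : Setoid Q) (c : Quotient st) (a : A) :
    Option (Quotient st) :=
  (M.delta (Quotient.out c) a).map (Quotient.mk st)

/-- String extension of the quotient transition function. -/
noncomputable def qdhat (M : WDFA Q A) (st : Setoid Q) : Quotient st → List A → Option (Quotient st)
  | c, [] => some c
  | c, a :: w => (M.qdelta st c a).bind (fun d => M.qdhat st d w)

/-- The quotient automaton accepts `w`. -/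
def qAcc (M : WDFA Q A) (st : Setoid Q) (w : List A) : Prop :=
  ∃ c, M.qdhat st (Quotient.mk st M.start) w = some c ∧
    ∃ u ∈ M.F, Quotient.mk st u = c

/-- Order induced on `≡`-classes by the Wheeler order (classes are
intervals, so comparing arbitrary representatives is well defined). -/
def qle (st : Setoid Q) (c d : Quotient st) : Prop :=
  c = d ∨ ∀ u v : Q, Quotient.mk st u = c → Quotient.mk st v = d → u < v

end WDFA

/-! An edge from a border `x` to a border `y` means that `x` is the image of `y` under
`δ(·, a)` componentwise. By Wheeler axiom (iii), transitions with a fixed label reflect the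
strict order of their targets, so any two such `y = (u, v)`, `y' = (u', v')` satisfy `u' < v`
and `u < v'`; adjacency then forces `y = y'`. Hence an edge is determined by the first state of
its source, which has a successor in the Wheeler order and so is not the maximum: at most
`n - 1` choices. -/

namespace WDFA

variable {Q A : Type} [LinearOrder Q] [LinearOrder A]

theorem lt_of_delta_lt (M : WDFA Q A) {u v p q : Q} {a : A}
    (hu : M.delta u a = some p) (hv : M.delta v a = some q) (hpq : p < q) : u < v := by
  by_contra! hvu
  rcases hvu.lt_or_eq with hlt | rfl
  · exact (M.w3 hv hu hlt).not_gt hpq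
  · exact hpq.ne (Option.some_injective _ (hu.symm.trans hv))

theorem Adj.right_unique {M : WDFA Q A} {u v v' : Q} (h : M.Adj u v) (h' : M.Adj u v') :
    v = v' := by
  rcases lt_trichotomy v v' with hlt | heq | hgt
  · exact absurd ⟨h.1, hlt⟩ (h'.2 v)
  · exact heq
  · exact absurd ⟨h'.1, hgt⟩ (h.2 v')

theorem Adj.le_of_lt_right {M : WDFA Q A} {u v w : Q} (h : M.Adj u v) (hw : w < v) :
    w ≤ u :=
  not_lt.mp fun huw => h.2 w ⟨huw, hw⟩

theorem EdgeZ.right_unique {M : WDFA Q A} {lam : Q → WithBot A} {x y y' : Q × Q}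
    (h : M.EdgeZ lam x y) (h' : M.EdgeZ lam x y') : y = y' := by
  obtain ⟨hx, hy, a, hxa, hy₁, hy₂⟩ := h
  obtain ⟨-, hy', a', hxa', hy₁', hy₂'⟩ := h'
  obtain rfl : a = a' := WithBot.coe_injective (hxa.symm.trans hxa')
  have hx₁₂ : x.1 < x.2 := hx.1.1
  have hfst : y.1 = y'.1 :=
    le_antisymm (hy'.1.le_of_lt_right (M.lt_of_delta_lt hy₁ hy₂' hx₁₂))
      (hy.1.le_of_lt_right (M.lt_of_delta_lt hy₁' hy₂ hx₁₂))
  exact Prod.ext hfst (hy.1.right_unique (hfst ▸ hy'.1))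

theorem EdgeZ.eq_of_fst_fst_eq {M : WDFA Q A} {lam : Q → WithBot A} {x y x' y' : Q × Q}
    (h : M.EdgeZ lam x y) (h' : M.EdgeZ lam x' y') (hx : x.1 = x'.1) : (x, y) = (x', y') := by
  obtain rfl : x = x' := Prod.ext hx (h.1.1.right_unique (hx ▸ h'.1.1))
  rw [h.right_unique h']

end WDFA

theorem Set.ncard_setOf_exists_gt_le {Q : Type*} [LinearOrder Q] [Finite Q] :
    {u : Q | ∃ v, u < v}.ncard ≤ Nat.card Q - 1 := by
  cases isEmpty_or_nonempty Q
  · simp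
  obtain ⟨m, hm⟩ := Finite.exists_max (id : Q → Q)
  have hne : {u : Q | ∃ v, u < v} ≠ univ := fun h =>
    have ⟨v, hmv⟩ : m ∈ {u : Q | ∃ v, u < v} := h ▸ mem_univ m
    hmv.not_ge (hm v)
  have := ncard_lt_card hne
  omega

theorem wdfa_border_graph_size_general {Q A : Type} [LinearOrder Q] [LinearOrder A]
    [Fintype Q] (M : WDFA Q A) (lam : Q → WithBot A) :
    (∀ x y y' : Q × Q, M.EdgeZ lam x y → M.EdgeZ lam x y' → y = y') ∧
    {p : (Q × Q) × (Q × Q) | M.EdgeZ lam p.1 p.2}.ncard ≤ Fintype.card Q - 1 := by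
  refine ⟨fun x y y' h h' => h.right_unique h', ?_⟩
  have hmaps : ∀ p ∈ {p : (Q × Q) × (Q × Q) | M.EdgeZ lam p.1 p.2},
      p.1.1 ∈ {u : Q | ∃ v, u < v} := fun p hp => ⟨p.1.2, hp.1.1.1⟩
  have hinj : Set.InjOn (fun p : (Q × Q) × (Q × Q) => p.1.1)
      {p | M.EdgeZ lam p.1 p.2} := fun _ hp _ hp' => hp.eq_of_fst_fst_eq hp'
  calc {p : (Q × Q) × (Q × Q) | M.EdgeZ lam p.1 p.2}.ncard
      ≤ {u : Q | ∃ v, u < v}.ncard := Set.ncard_le_ncard_of_injOn _ hmaps hinj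
    _ ≤ Fintype.card Q - 1 := Nat.card_eq_fintype_card (α := Q) ▸ Set.ncard_setOf_exists_gt_le

/-- in the border graph every node has out-degree at most one,
hence the border graph has at most `n - 1` edges. -/
theorem wdfa_border_graph_size {Q A : Type} [LinearOrder Q] [LinearOrder A]
    [Fintype Q] (M : WDFA Q A) (lam : Q → WithBot A) (hlam : M.HasLam lam) :
    (∀ x y y' : Q × Q, M.EdgeZ lam x y → M.EdgeZ lam x y' → y = y') ∧
    {p : (Q × Q) × (Q × Q) | M.EdgeZ lam p.1 p.2}.ncard ≤ Fintype.card Q - 1 :=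
  wdfa_border_graph_size_general M lam
end

section
/- Let A be a Wheeler DFA with adjacent states u_i, u_{i+1} and suppose u_i ≉ u_{i+1} (not Myhill-Nerode equivalent). Let α be a shortest string witnessing the inequivalence. Then there exists a (possibly shorter) string β such that v = δ̂(u_i, β) and v' = δ̂(u_{i+1}, β) are both defined, v ≠ v', and either out(v) ≠ out(v') or exactly one of v, v' is final. -/
/-! Follow the witness letter by letter from both states. As long as the current states have
the same outgoing labels, both move on the next letter, to states on which the rest of the
witness is still a witness; so at the latest when the witness is exhausted the run reaches
states that differ in outgoing labels or in finality. -/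

namespace WDFA

variable {Q A : Type} [LinearOrder Q] [LinearOrder A] (M : WDFA Q A)

theorem acc_nil_iff (q : Q) : M.Acc q [] ↔ q ∈ M.F := by
  simp [Acc, dhat]

theorem acc_cons_iff_of_delta_eq_some {q p : Q} {a : A} (h : M.delta q a = some p)
    (w : List A) : M.Acc q (a :: w) ↔ M.Acc p w := by
  simp [Acc, dhat, h]

theorem dhat_cons_of_delta_eq_some {q p : Q} {a : A} (h : M.delta q a = some p)
    (w : List A) : M.dhat q (a :: w) = M.dhat p w := by
  simp [dhat, h]

theorem not_acc_cons_of_delta_eq_none {q : Q} {a : A} (h : M.delta q a = none)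
    (w : List A) : ¬ M.Acc q (a :: w) := by
  simp [Acc, dhat, h]

theorem ne_of_not_acc_iff {u u' : Q} {w : List A} (hwit : ¬ (M.Acc u w ↔ M.Acc u' w)) :
    u ≠ u' := by
  rintro rfl
  exact hwit Iff.rfl

theorem out_ne_of_delta_eq_none {u u' p' : Q} {a : A} (hu : M.delta u a = none)
    (hu' : M.delta u' a = some p') : M.out u ≠ M.out u' := by
  intro h
  have ha : a ∈ M.out u' := by simp [out, hu']
  rw [← h] at ha
  simp [out, hu] at ha

theorem out_ne_or_exists_delta_of_not_acc_cons_iff {u u' : Q} {a : A} {w : List A}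
    (hwit : ¬ (M.Acc u (a :: w) ↔ M.Acc u' (a :: w))) :
    M.out u ≠ M.out u' ∨ ∃ p p', M.delta u a = some p ∧ M.delta u' a = some p' ∧
      ¬ (M.Acc p w ↔ M.Acc p' w) := by
  cases hu : M.delta u a with
  | none =>
    cases hu' : M.delta u' a with
    | none =>
      exact absurd (iff_of_false (M.not_acc_cons_of_delta_eq_none hu w)
        (M.not_acc_cons_of_delta_eq_none hu' w)) hwit
    | some p' => exact Or.inl (M.out_ne_of_delta_eq_none hu hu')
  | some p =>
    cases hu' : M.delta u' a with
    | none => exact Or.inl (M.out_ne_of_delta_eq_none hu' hu).symm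
    | some p' =>
      rw [M.acc_cons_iff_of_delta_eq_some hu, M.acc_cons_iff_of_delta_eq_some hu'] at hwit
      exact Or.inr ⟨p, p', rfl, rfl, hwit⟩

theorem exists_prefix_out_ne_or_xor_mem_F (α : List A) {u u' : Q}
    (hwit : ¬ (M.Acc u α ↔ M.Acc u' α)) :
    ∃ (β : List A) (v v' : Q), β.length ≤ α.length ∧
      M.dhat u β = some v ∧ M.dhat u' β = some v' ∧ v ≠ v' ∧
      (M.out v ≠ M.out v' ∨ Xor (v ∈ M.F) (v' ∈ M.F)) := by
  induction α generalizing u u' with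
  | nil =>
    have hF : Xor (u ∈ M.F) (u' ∈ M.F) := by
      rwa [xor_iff_not_iff, ← M.acc_nil_iff, ← M.acc_nil_iff]
    exact ⟨[], u, u', le_rfl, rfl, rfl, M.ne_of_not_acc_iff hwit, Or.inr hF⟩
  | cons a w ih =>
    rcases M.out_ne_or_exists_delta_of_not_acc_cons_iff hwit with hout | ⟨p, p', hp, hp', hwit'⟩
    · exact ⟨[], u, u', Nat.zero_le _, rfl, rfl, M.ne_of_not_acc_iff hwit, Or.inl hout⟩
    · obtain ⟨β, v, v', hlen, hv, hv', hvv', hdiff⟩ := ih hwit'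
      refine ⟨a :: β, v, v', Nat.succ_le_succ hlen, ?_, ?_, hvv', hdiff⟩
      · rwa [M.dhat_cons_of_delta_eq_some hp]
      · rwa [M.dhat_cons_of_delta_eq_some hp']

end WDFA

theorem wdfa_shortest_witness_general {Q A : Type} [LinearOrder Q] [LinearOrder A]
    (M : WDFA Q A) (ui ui1 : Q) (α : List A)
    (hwit : ¬ (M.Acc ui α ↔ M.Acc ui1 α)) :
    ∃ (β : List A) (v v' : Q), β.length ≤ α.length ∧
      M.dhat ui β = some v ∧ M.dhat ui1 β = some v' ∧ v ≠ v' ∧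
      (M.out v ≠ M.out v' ∨ Xor' (v ∈ M.F) (v' ∈ M.F)) :=
  M.exists_prefix_out_ne_or_xor_mem_F α hwit

/-- if adjacent states `u_i, u_{i+1}` are not Myhill–Nerode
equivalent and `α` is a shortest witness, then some string `β` (no longer
than `α`) leads both to defined, distinct states that differ in their
outgoing labels or in finality (exactly one final). -/
theorem wdfa_shortest_witness {Q A : Type} [LinearOrder Q] [LinearOrder A]
    (M : WDFA Q A) (ui ui1 : Q) (hadj : M.Adj ui ui1)
    (hne : ¬ M.MNacc ui ui1) (α : List A)
    (hwit : ¬ (M.Acc ui α ↔ M.Acc ui1 α))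
    (hmin : ∀ β : List A, β.length < α.length → (M.Acc ui β ↔ M.Acc ui1 β)) :
    ∃ (β : List A) (v v' : Q), β.length ≤ α.length ∧
      M.dhat ui β = some v ∧ M.dhat ui1 β = some v' ∧ v ≠ v' ∧
      (M.out v ≠ M.out v' ∨ Xor' (v ∈ M.F) (v' ∈ M.F)) :=
  wdfa_shortest_witness_general M ui ui1 α hwit
end

section
/- Correctness of border-marking: in a Wheeler DFA A with adjacent states u_i < u_{i+1}, we have u_i ≉ u_{i+1} (not Myhill-Nerode equivalent) if and only if there exists a string α such that v = δ̂(u_i, α) and v' = δ̂(u_{i+1}, α) are both defined, and either out(v) ≠ out(v') or final(v) ≠ final(v'). -/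
namespace WDFA

variable {Q A : Type} [LinearOrder Q] [LinearOrder A]

/-!
Myhill–Nerode equivalence is inherited along a common word, and in a co-accessible automaton
equivalent states have the same outgoing labels (each label can be completed to an accepted
word) and the same finality. Conversely, on a word accepted from exactly one of the two states
the two runs can be followed letter by letter until they first differ locally.
-/

def LocallyDistinguishable (M : WDFA Q A) (u v : Q) : Prop :=
  ∃ (α : List A) (p p' : Q), M.dhat u α = some p ∧ M.dhat v α = some p' ∧
    (M.out p ≠ M.out p' ∨ ¬ (p ∈ M.F ↔ p' ∈ M.F))

section

variable (M : WDFA Q A)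

theorem dhat_append (u : Q) (α β : List A) :
    M.dhat u (α ++ β) = (M.dhat u α).bind (fun p => M.dhat p β) := by
  induction α generalizing u with
  | nil => rfl
  | cons a α ih =>
    cases h : M.delta u a <;> simp [dhat, h, ih]

theorem acc_nil (u : Q) : M.Acc u [] ↔ u ∈ M.F := by
  simp [Acc, dhat]

theorem acc_cons (u : Q) (a : A) (w : List A) :
    M.Acc u (a :: w) ↔ ∃ p, M.delta u a = some p ∧ M.Acc p w := by
  cases h : M.delta u a <;> simp [Acc, dhat, h]

theorem acc_append_iff_of_dhat_eq_some {u p : Q} {α : List A} (h : M.dhat u α = some p)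
    (β : List A) : M.Acc u (α ++ β) ↔ M.Acc p β := by
  simp only [Acc, dhat_append, h, Option.bind_some]

theorem mem_out_iff (u : Q) (a : A) : a ∈ M.out u ↔ ∃ p, M.delta u a = some p :=
  Option.isSome_iff_exists

end

variable {M : WDFA Q A}

theorem MNacc.symm {u v : Q} (h : M.MNacc u v) : M.MNacc v u :=
  fun w => (h w).symm

theorem MNacc.of_dhat {u v p p' : Q} {α : List A} (h : M.MNacc u v)
    (hp : M.dhat u α = some p) (hp' : M.dhat v α = some p') : M.MNacc p p' := fun β => by
  rw [← M.acc_append_iff_of_dhat_eq_some hp, ← M.acc_append_iff_of_dhat_eq_some hp']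
  exact h (α ++ β)

theorem MNacc.mem_F_iff {u v : Q} (h : M.MNacc u v) : u ∈ M.F ↔ v ∈ M.F := by
  simpa only [acc_nil] using h []

theorem MNacc.out_subset (hco : M.Coacc) {u v : Q} (h : M.MNacc u v) :
    M.out u ⊆ M.out v := fun a ha => by
  obtain ⟨p, hp⟩ := (M.mem_out_iff u a).mp ha
  obtain ⟨β, hβ⟩ := hco p
  have hacc : M.Acc v (a :: β) := (h (a :: β)).mp ((M.acc_cons u a β).mpr ⟨p, hp, hβ⟩)
  obtain ⟨p', hp', -⟩ := (M.acc_cons v a β).mp hacc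
  exact (M.mem_out_iff v a).mpr ⟨p', hp'⟩

theorem MNacc.out_eq (hco : M.Coacc) {u v : Q} (h : M.MNacc u v) :
    M.out u = M.out v :=
  (h.out_subset hco).antisymm (h.symm.out_subset hco)

theorem not_mnacc_of_locallyDistinguishable (hco : M.Coacc) {u v : Q}
    (h : M.LocallyDistinguishable u v) : ¬ M.MNacc u v := by
  intro hMN
  obtain ⟨α, p, p', hp, hp', hdiff | hdiff⟩ := h
  · exact hdiff ((hMN.of_dhat hp hp').out_eq hco)
  · exact hdiff (hMN.of_dhat hp hp').mem_F_iff

theorem locallyDistinguishable_of_out_ne {u v : Q} (h : M.out u ≠ M.out v) :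
    M.LocallyDistinguishable u v :=
  ⟨[], u, v, rfl, rfl, Or.inl h⟩

theorem LocallyDistinguishable.cons {u v p p' : Q} {a : A}
    (hp : M.delta u a = some p) (hp' : M.delta v a = some p')
    (h : M.LocallyDistinguishable p p') : M.LocallyDistinguishable u v := by
  obtain ⟨α, q, q', hq, hq', hdiff⟩ := h
  exact ⟨a :: α, q, q', by simp [dhat, hp, hq], by simp [dhat, hp', hq'], hdiff⟩

theorem locallyDistinguishable_of_not_acc_iff {u v : Q} {w : List A}
    (h : ¬ (M.Acc u w ↔ M.Acc v w)) : M.LocallyDistinguishable u v := by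
  induction w generalizing u v with
  | nil => exact ⟨[], u, v, rfl, rfl, Or.inr (by simpa only [acc_nil] using h)⟩
  | cons a w ih =>
    rw [acc_cons, acc_cons] at h
    cases hu : M.delta u a with
    | none =>
      cases hv : M.delta v a with
      | none => simp [hu, hv] at h
      | some p' =>
        refine locallyDistinguishable_of_out_ne fun hout => ?_
        have ha : a ∈ M.out u := hout ▸ (M.mem_out_iff v a).mpr ⟨p', hv⟩
        simp [mem_out_iff, hu] at ha
    | some p =>
      cases hv : M.delta v a with
      | none =>
        refine locallyDistinguishable_of_out_ne fun hout => ?_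
        have ha : a ∈ M.out v := hout ▸ (M.mem_out_iff u a).mpr ⟨p, hu⟩
        simp [mem_out_iff, hv] at ha
      | some p' => exact .cons hu hv (ih (by simpa [hu, hv] using h))

end WDFA

theorem wdfa_marking_correct_general {Q A : Type} [LinearOrder Q] [LinearOrder A]
    (M : WDFA Q A) (hco : M.Coacc) (ui ui1 : Q) :
    ¬ M.MNacc ui ui1 ↔
      ∃ (α : List A) (v v' : Q), M.dhat ui α = some v ∧ M.dhat ui1 α = some v' ∧
        (M.out v ≠ M.out v' ∨ ¬ (v ∈ M.F ↔ v' ∈ M.F)) := by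
  refine ⟨fun h => ?_, WDFA.not_mnacc_of_locallyDistinguishable hco⟩
  obtain ⟨w, hw⟩ : ∃ w, ¬ (M.Acc ui w ↔ M.Acc ui1 w) := not_forall.mp h
  exact WDFA.locallyDistinguishable_of_not_acc_iff hw

/-- correctness of border-marking: adjacent states are
Myhill–Nerode inequivalent iff some string leads both to defined states
differing in outgoing labels or in finality. -/
theorem wdfa_marking_correct {Q A : Type} [LinearOrder Q] [LinearOrder A]
    (M : WDFA Q A) (hco : M.Coacc) (ui ui1 : Q) (hadj : M.Adj ui ui1) :
    ¬ M.MNacc ui ui1 ↔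
      ∃ (α : List A) (v v' : Q), M.dhat ui α = some v ∧ M.dhat ui1 α = some v' ∧
        (M.out v ≠ M.out v' ∨ ¬ (v ∈ M.F ↔ v' ∈ M.F)) :=
  wdfa_marking_correct_general M hco ui ui1
end
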